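/- The set of ∼-equivalence classes of (+)-admissible sequences in 𝔖, partially ordered by ⪯, is a lattice in which the greatest lower bound and the least upper bound are induced by the operations ∧ and ∨ respectively. -/

import Mathlib

namespace KP

/-! ## Quivers on a fixed vertex set `Fin n`.

An orientation is encoded by `Λ : Fin n → Fin n → ℕ`, where `Λ a b` is the number of
arrows from `a` to `b`.  The underlying graph is recorded by `edges Λ a b = Λ a b + Λ b a`. -/

/-- The orientation `σ_x Λ` obtained by reversing every arrow incident with `x`. -/
def flipO {n : ℕ} (x : Fin n) (Λ : Fin n → Fin n → ℕ) : Fin n → Fin n → ℕ :=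
  fun a b => if a = x ∨ b = x then Λ b a else Λ a b

/-- Number of edges of the underlying graph joining `a` and `b`. -/
def edges {n : ℕ} (Λ : Fin n → Fin n → ℕ) (a b : Fin n) : ℕ := Λ a b + Λ b a

/-- `x` is a sink: no arrow starts at `x`. -/
def IsSink {n : ℕ} (Λ : Fin n → Fin n → ℕ) (x : Fin n) : Prop := ∀ y, Λ x y = 0

/-- `S` is a `(+)`-admissible sequence of vertices on `(Γ, Λ)`. -/
def Admissible {n : ℕ} (Λ : Fin n → Fin n → ℕ) : List (Fin n) → Prop
  | [] => True
  | x :: xs => IsSink Λ x ∧ Admissible (flipO x Λ) xs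

/-- The orientation `Λ^S`. -/
def orientAfter {n : ℕ} (Λ : Fin n → Fin n → ℕ) : List (Fin n) → (Fin n → Fin n → ℕ)
  | [] => Λ
  | x :: xs => orientAfter (flipO x Λ) xs

/-- Elementary move: interchange two consecutive vertices not joined by an edge. -/
inductive SwapRel {n : ℕ} (E : Fin n → Fin n → ℕ) : List (Fin n) → List (Fin n) → Prop
  | swap (l₁ l₂ : List (Fin n)) (a b : Fin n) (h : E a b = 0) :
      SwapRel E (l₁ ++ a :: b :: l₂) (l₁ ++ b :: a :: l₂)

/-- The equivalence `∼` on sequences of vertices: reflexive–transitive closure of the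
(symmetric) relation `SwapRel`. -/
def Sim {n : ℕ} (E : Fin n → Fin n → ℕ) : List (Fin n) → List (Fin n) → Prop :=
  Relation.ReflTransGen (SwapRel E)

/-- The preorder `S ⪯ T` : `T ∼ S ++ U` for some `(+)`-admissible sequence `U` on `(Γ, Λ^S)`. -/
def Preceq {n : ℕ} (Λ : Fin n → Fin n → ℕ) (S T : List (Fin n)) : Prop :=
  ∃ U, Admissible (orientAfter Λ S) U ∧ Sim (edges Λ) T (S ++ U)

/-- Support of a sequence of vertices. -/
def suppOf {n : ℕ} (S : List (Fin n)) : Set (Fin n) := {v | v ∈ S}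

/-- The partial order on vertices: `x ≤ y` iff there is a path from `x` to `y` in `(Γ, Λ)`. -/
def PathLE {n : ℕ} (Λ : Fin n → Fin n → ℕ) (x y : Fin n) : Prop :=
  Relation.ReflTransGen (fun a b => Λ a b ≠ 0) x y

/-- A filter (up-closed set) of the poset `(Γ₀, Λ)`. -/
def IsFilter {n : ℕ} (Λ : Fin n → Fin n → ℕ) (F : Set (Fin n)) : Prop :=
  ∀ x ∈ F, ∀ y, PathLE Λ x y → y ∈ F

/-- The principal filter `⟨x⟩`. -/
def upSet {n : ℕ} (Λ : Fin n → Fin n → ℕ) (x : Fin n) : Set (Fin n) := {y | PathLE Λ x y}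

/-- The hull `H_Λ(F)`: the smallest filter containing `F` and every vertex joined
by an edge to a vertex of `F`. -/
def hull {n : ℕ} (Λ : Fin n → Fin n → ℕ) (F : Set (Fin n)) : Set (Fin n) :=
  {y | ∃ x, (x ∈ F ∨ ∃ z ∈ F, edges Λ z x ≠ 0) ∧ PathLE Λ x y}

/-- `segs` is a canonical form of `S` (Proposition 2.1): `S ∼ S₁S₂⋯S_r`, each segment
consists of distinct vertices, is nonempty, and `Supp S_i = Supp (S_i S_{i+1} ⋯ S_r)`. -/
def Segments {n : ℕ} (Λ : Fin n → Fin n → ℕ) (S : List (Fin n))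
    (segs : List (List (Fin n))) : Prop :=
  Admissible Λ segs.flatten ∧ Sim (edges Λ) S segs.flatten ∧
  (∀ seg ∈ segs, seg ≠ [] ∧ seg.Nodup) ∧
  ∀ i, i < segs.length → suppOf (segs.getD i []) = suppOf ((segs.drop i).flatten)

/-- `J` is (a representative of) the join `S ∨ T` (Definition 2.4):  the canonical form of `J`
has `Supp R_i = Supp S_i ∪ Supp T_i` (out-of-range segments read as `∅`). -/
def IsJoin {n : ℕ} (Λ : Fin n → Fin n → ℕ) (S T J : List (Fin n)) : Prop :=
  ∃ CS CT CJ, Segments Λ S CS ∧ Segments Λ T CT ∧ Segments Λ J CJ ∧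
    ∀ i, suppOf (CJ.getD i []) = suppOf (CS.getD i []) ∪ suppOf (CT.getD i [])

/-- `M` is (a representative of) the meet `S ∧ T` (Definition 2.4). -/
def IsMeet {n : ℕ} (Λ : Fin n → Fin n → ℕ) (S T M : List (Fin n)) : Prop :=
  ∃ CS CT CM, Segments Λ S CS ∧ Segments Λ T CT ∧ Segments Λ M CM ∧
    ∀ i, suppOf (CM.getD i []) = suppOf (CS.getD i []) ∩ suppOf (CT.getD i [])

/-- `S` is (equivalent to) the join `T₁ ∨ ⋯ ∨ T_l` of the list of sequences `Ts`. -/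
def IsJoinList {n : ℕ} (Λ : Fin n → Fin n → ℕ) : List (List (Fin n)) → List (Fin n) → Prop
  | [], S => S = []
  | T :: Ts, S => ∃ J, IsJoinList Λ Ts J ∧ IsJoin Λ T J S

/-- The segments of a canonical form of a principal sequence `S_{r,x}` (Definition 3.1). -/
def PrincipalSegs {n : ℕ} (Λ : Fin n → Fin n → ℕ) (segs : List (List (Fin n)))
    (r : ℕ) (x : Fin n) : Prop :=
  segs.length = r ∧ 0 < r ∧
  (∀ i, i + 1 < r → suppOf (segs.getD i []) = hull Λ (suppOf (segs.getD (i+1) []))) ∧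
  suppOf (segs.getD (r-1) []) = upSet Λ x

/-- `S ∼ S_{r,x}`, the principal `(+)`-admissible sequence of size `r` with
`Supp S_r = ⟨x⟩`. -/
def IsPrincipalSeq {n : ℕ} (Λ : Fin n → Fin n → ℕ) (r : ℕ) (x : Fin n)
    (S : List (Fin n)) : Prop :=
  ∃ segs, Segments Λ S segs ∧ PrincipalSegs Λ segs r x

/-- `S` is a principal `(+)`-admissible sequence. -/
def IsPrincipal {n : ℕ} (Λ : Fin n → Fin n → ℕ) (S : List (Fin n)) : Prop :=
  ∃ r x, IsPrincipalSeq Λ r x S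


/-! ## Representations of `(Γ, Λ)` over a field `k`. -/

/-- A (finite-dimensional) representation of the quiver `(Γ, Λ)` over `k`:
the space at vertex `x` is `Fin (d x) → k`, and each arrow carries a linear map. -/
structure Rep (k : Type) [Field k] (n : ℕ) (Λ : Fin n → Fin n → ℕ) where
  d : Fin n → ℕ
  f : ∀ a b : Fin n, Fin (Λ a b) → ((Fin (d a) → k) →ₗ[k] (Fin (d b) → k))

variable {k : Type} [Field k] {n : ℕ}

/-- A morphism of representations. -/
structure RepHom {Λ : Fin n → Fin n → ℕ} (M N : Rep k n Λ) where
  g : ∀ x, (Fin (M.d x) → k) →ₗ[k] (Fin (N.d x) → k)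
  comm : ∀ a b i v, g b (M.f a b i v) = N.f a b i (g a v)

/-- Isomorphism of representations. -/
def RepIso {Λ : Fin n → Fin n → ℕ} (M N : Rep k n Λ) : Prop :=
  ∃ g : ∀ x, (Fin (M.d x) → k) ≃ₗ[k] (Fin (N.d x) → k),
    ∀ a b i v, g b (M.f a b i v) = N.f a b i (g a v)

/-- The zero representation. -/
def IsZeroRep {Λ : Fin n → Fin n → ℕ} (M : Rep k n Λ) : Prop := ∀ x, M.d x = 0

/-- Cast between the standard spaces. -/
def castL (k : Type) [Field k] {m m' : ℕ} (h : m = m') : (Fin m → k) ≃ₗ[k] (Fin m' → k) :=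
  LinearEquiv.funCongrLeft k k (finCongr h.symm)

/-- The splitting `(Fin (m + p) → k) ≃ₗ (Fin m → k) × (Fin p → k)`. -/
def splitL (k : Type) [Field k] (m p : ℕ) : (Fin (m + p) → k) ≃ₗ[k] (Fin m → k) × (Fin p → k) :=
  (LinearEquiv.funCongrLeft k k finSumFinEquiv).trans
    (LinearEquiv.sumArrowLequivProdArrow _ _ k k)

/-- Direct sum of two representations. -/
def dSum {Λ : Fin n → Fin n → ℕ} (M N : Rep k n Λ) : Rep k n Λ where
  d x := M.d x + N.d x
  f a b i :=
    (splitL k (M.d b) (N.d b)).symm.toLinearMap ∘ₗ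
      (LinearMap.prodMap (M.f a b i) (N.f a b i)) ∘ₗ (splitL k (M.d a) (N.d a)).toLinearMap

/-- The zero representation (as an object). -/
def zeroRep (k : Type) [Field k] (n : ℕ) (Λ : Fin n → Fin n → ℕ) : Rep k n Λ where
  d _ := 0
  f _ _ _ := 0

/-- Direct sum of a list of representations. -/
def dSumList {Λ : Fin n → Fin n → ℕ} (L : List (Rep k n Λ)) : Rep k n Λ :=
  L.foldr dSum (zeroRep k n Λ)

/-- `M` is indecomposable. -/
def Indecomp {Λ : Fin n → Fin n → ℕ} (M : Rep k n Λ) : Prop :=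
  ¬ IsZeroRep M ∧ ∀ A B : Rep k n Λ, RepIso M (dSum A B) → IsZeroRep A ∨ IsZeroRep B

/-- `X` is a direct summand of `M`. -/
def IsSummand {Λ : Fin n → Fin n → ℕ} (X M : Rep k n Λ) : Prop :=
  ∃ Y, RepIso M (dSum X Y)

/-! ### Reflection functors (on objects) -/

/-- Index type of the arrows ending at `x`. -/
abbrev Arin {n : ℕ} (Λ : Fin n → Fin n → ℕ) (x : Fin n) := Σ y : Fin n, Fin (Λ y x)

/-- Index type of the arrows starting at `x`. -/
abbrev Aout {n : ℕ} (Λ : Fin n → Fin n → ℕ) (x : Fin n) := Σ y : Fin n, Fin (Λ x y)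

/-- The map `h : ⊕_{a : y → x} V(y) → V(x)` induced by the maps along the arrows ending at `x`. -/
noncomputable def inMap (Λ : Fin n → Fin n → ℕ) (M : Rep k n Λ) (x : Fin n) :
    ((p : Arin Λ x) → (Fin (M.d p.1) → k)) →ₗ[k] (Fin (M.d x) → k) :=
  ∑ p : Arin Λ x, (M.f p.1 x p.2) ∘ₗ LinearMap.proj p

/-- The map `h' : V(x) → ⊕_{a : x → y} V(y)` induced by the maps along arrows starting at `x`. -/
def outMap (Λ : Fin n → Fin n → ℕ) (M : Rep k n Λ) (x : Fin n) :
    (Fin (M.d x) → k) →ₗ[k] ((p : Aout Λ x) → (Fin (M.d p.1) → k)) :=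
  LinearMap.pi fun p => M.f x p.1 p.2

noncomputable def kerEquiv (Λ : Fin n → Fin n → ℕ) (M : Rep k n Λ) (x : Fin n) :
    LinearMap.ker (inMap Λ M x) ≃ₗ[k]
      (Fin (Module.finrank k (LinearMap.ker (inMap Λ M x))) → k) :=
  (Module.finBasis k _).equivFun

noncomputable def cokerEquiv (Λ : Fin n → Fin n → ℕ) (M : Rep k n Λ) (x : Fin n) :
    (((p : Aout Λ x) → (Fin (M.d p.1) → k)) ⧸ LinearMap.range (outMap Λ M x)) ≃ₗ[k]
      (Fin (Module.finrank k (((p : Aout Λ x) → (Fin (M.d p.1) → k)) ⧸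
        LinearMap.range (outMap Λ M x))) → k) :=
  (Module.finBasis k _).equivFun

/-- The positive reflection functor `F_x⁺` (on objects): the space at `x` is replaced
by the kernel of `inMap`, with the maps along the reversed arrows induced by inclusion
followed by the projections. -/
noncomputable def reflPlus (x : Fin n) (Λ : Fin n → Fin n → ℕ) (M : Rep k n Λ) :
    Rep k n (flipO x Λ) where
  d z := if z = x then Module.finrank k (LinearMap.ker (inMap Λ M x)) else M.d z
  f a b i :=
    if ha : a = x then
      if hb : b = x then 0
      else
        (castL k (if_neg hb).symm).toLinearMap ∘ₗ
          (LinearMap.proj (φ := fun p : Arin Λ x => Fin (M.d p.1) → k)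
            (⟨b, Fin.cast (by subst ha; simp [flipO]) i⟩ : Arin Λ x)) ∘ₗ
          (LinearMap.ker (inMap Λ M x)).subtype ∘ₗ
          (kerEquiv Λ M x).symm.toLinearMap ∘ₗ (castL k (if_pos ha)).toLinearMap
    else
      if hb : b = x then 0
      else
        (castL k (if_neg hb).symm).toLinearMap ∘ₗ
          M.f a b (Fin.cast (by simp [flipO, ha, hb]) i) ∘ₗ
          (castL k (if_neg ha)).toLinearMap

/-- The negative reflection functor `F_x⁻` (on objects), presented as a map from
representations of `(Γ, σ_x Λ)` to representations of `(Γ, Λ)`: the space at `x` is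
replaced by the cokernel of `outMap`. -/
noncomputable def reflMinus (x : Fin n) (Λ : Fin n → Fin n → ℕ)
    (N : Rep k n (flipO x Λ)) : Rep k n Λ where
  d z := if z = x then
      Module.finrank k (((p : Aout (flipO x Λ) x) → (Fin (N.d p.1) → k)) ⧸
        LinearMap.range (outMap (flipO x Λ) N x))
    else N.d z
  f a b i :=
    if hb : b = x then
      if ha : a = x then 0
      else
        (castL k (if_pos hb).symm).toLinearMap ∘ₗ
          (cokerEquiv (flipO x Λ) N x).toLinearMap ∘ₗ
          (LinearMap.range (outMap (flipO x Λ) N x)).mkQ ∘ₗ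
          (LinearMap.single k (fun p : Aout (flipO x Λ) x => Fin (N.d p.1) → k)
            (⟨a, Fin.cast (by subst hb; simp [flipO]) i⟩ : Aout (flipO x Λ) x)) ∘ₗ
          (castL k (if_neg ha)).toLinearMap
    else
      if ha : a = x then 0
      else
        (castL k (if_neg hb).symm).toLinearMap ∘ₗ
          N.f a b (Fin.cast (by simp [flipO, ha, hb]) i) ∘ₗ
          (castL k (if_neg ha)).toLinearMap

/-- `F(S) = F_{x_s}⁺ ⋯ F_{x_1}⁺` applied to a representation. -/
noncomputable def FList : (S : List (Fin n)) → (Λ : Fin n → Fin n → ℕ) → Rep k n Λ →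
    Rep k n (orientAfter Λ S)
  | [], _, M => M
  | x :: xs, Λ, M => FList xs (flipO x Λ) (reflPlus x Λ M)

/-- `S` annihilates `M` : `F(S) M = 0`. -/
def Annihilates (Λ : Fin n → Fin n → ℕ) (S : List (Fin n)) (M : Rep k n Λ) : Prop :=
  IsZeroRep (FList S Λ M)

/-- `M` is preprojective: some `(+)`-admissible sequence annihilates it. -/
def Preprojective (Λ : Fin n → Fin n → ℕ) (M : Rep k n Λ) : Prop :=
  ∃ S, Admissible Λ S ∧ Annihilates Λ S M

/-- `S` is a shortest `(+)`-admissible sequence annihilating `M` : it annihilates `M` and no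
proper subsequence of `S` annihilates `M`.  (This predicate is invariant under `∼`, so it
expresses `S ∼ S_M`.) -/
def IsShortestAnn (Λ : Fin n → Fin n → ℕ) (M : Rep k n Λ) (S : List (Fin n)) : Prop :=
  Admissible Λ S ∧ Annihilates Λ S M ∧
  ∀ S', Admissible Λ S' → Annihilates Λ S' M → Preceq Λ S' S → Sim (edges Λ) S' S

/-- The simple representation `L_x` concentrated at the vertex `x`. -/
def simpleRep (Λ : Fin n → Fin n → ℕ) (x : Fin n) : Rep k n Λ where
  d z := if z = x then 1 else 0
  f _ _ _ := 0

/-- `M(S) = F_{x₁}⁻ F_{x₂}⁻ ⋯ F_{x_{s-1}}⁻ (L_{x_s})`, where `L_{x_s}` is the simple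
(projective) module over `k(Γ, σ_{x_{s-1}} ⋯ σ_{x_1} Λ)` at the vertex `x_s`. -/
noncomputable def Mof : (Λ : Fin n → Fin n → ℕ) → (S : List (Fin n)) → Rep k n Λ
  | Λ, [] => zeroRep k n Λ
  | Λ, [x] => simpleRep Λ x
  | Λ, x :: y :: ys => reflMinus x Λ (Mof (flipO x Λ) (y :: ys))

variable {n : ℕ}

/-! ## The Weyl group -/

/-- The simple reflection `σ_i` attached to a generalized Cartan matrix `A`,
as a linear endomorphism of `ℤⁿ` : `σ_i(v) = v - (∑ l, a_{il} v_l) e_i`. -/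
def sigmaL (A : Fin n → Fin n → ℤ) (i : Fin n) : (Fin n → ℤ) →ₗ[ℤ] (Fin n → ℤ) where
  toFun v := v - (∑ l, A i l * v l) • Pi.single i 1
  map_add' v w := by
    simp only [Pi.add_apply, mul_add, Finset.sum_add_distrib, add_smul]
    abel
  map_smul' c v := by
    simp only [Pi.smul_apply, smul_eq_mul, RingHom.id_apply, smul_sub]
    congr 1
    rw [smul_smul, Finset.mul_sum]
    congr 1
    exact Finset.sum_congr rfl fun l _ => by ring

theorem sigma_invol (A : Fin n → Fin n → ℤ) (hA : ∀ i, A i i = 2) (i : Fin n) :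
    (sigmaL A i).comp (sigmaL A i) = LinearMap.id := by
  apply LinearMap.ext
  intro v
  simp only [LinearMap.comp_apply, LinearMap.id_apply, sigmaL, LinearMap.coe_mk, AddHom.coe_mk]
  set c := ∑ l, A i l * v l with hc
  set s : Fin n → ℤ := Pi.single i 1 with hs
  have h1 : ∑ l, A i l * (v - c • s) l = -c := by
    have h2 : ∀ l, A i l * (v - c • s) l = A i l * v l - c * (A i l * s l) := fun l => by
      simp only [Pi.sub_apply, Pi.smul_apply, smul_eq_mul]
      ring
    rw [Finset.sum_congr rfl fun l _ => h2 l, Finset.sum_sub_distrib, ← Finset.mul_sum]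
    have h3 : ∑ l, A i l * s l = 2 := by
      rw [Finset.sum_eq_single i]
      · simp [hs, hA i]
      · intro b _ hb
        simp [hs, Pi.single_eq_of_ne hb]
      · simp
    rw [h3, ← hc]
    ring
  rw [h1]
  ext j
  simp only [Pi.sub_apply, Pi.smul_apply, smul_eq_mul]
  ring

/-- The simple reflection `σ_i` as an automorphism of `ℤⁿ`. -/
def sigmaE (A : Fin n → Fin n → ℤ) (hA : ∀ i, A i i = 2) (i : Fin n) :
    (Fin n → ℤ) ≃ₗ[ℤ] (Fin n → ℤ) :=
  LinearEquiv.ofLinear (sigmaL A i) (sigmaL A i) (sigma_invol A hA i) (sigma_invol A hA i)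

/-- The length `ℓ(w)`: the least `l ≥ 0` such that `w` is a product of `l` simple
reflections. -/
noncomputable def wordLen (A : Fin n → Fin n → ℤ) (hA : ∀ i, A i i = 2)
    (w : (Fin n → ℤ) ≃ₗ[ℤ] (Fin n → ℤ)) : ℕ :=
  sInf {l | ∃ ys : List (Fin n), ys.length = l ∧ w = (ys.map (sigmaE A hA)).prod}

/-- The word `w(S) = σ_{x_s} ⋯ σ_{x_1}` associated to a sequence `S = x₁, …, x_s`. -/
def wordOf (A : Fin n → Fin n → ℤ) (hA : ∀ i, A i i = 2) (S : List (Fin n)) :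
    (Fin n → ℤ) ≃ₗ[ℤ] (Fin n → ℤ) :=
  ((S.reverse).map (sigmaE A hA)).prod

/-- The symmetric generalized Cartan matrix of the underlying graph of `(Γ, Λ)`. -/
def cartanOf (Λ : Fin n → Fin n → ℕ) : Fin n → Fin n → ℤ :=
  fun i j => if i = j then 2 else -(edges Λ i j : ℤ)

theorem cartan_diag (Λ : Fin n → Fin n → ℕ) : ∀ i, cartanOf Λ i i = 2 := by
  intro i; simp [cartanOf]

/-- The simple reflections of the Weyl group of the underlying graph of `(Γ, Λ)`. -/
def wSig (Λ : Fin n → Fin n → ℕ) : Fin n → ((Fin n → ℤ) ≃ₗ[ℤ] (Fin n → ℤ)) :=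
  sigmaE (cartanOf Λ) (cartan_diag Λ)

/-- `w(S)` for a sequence of vertices of `(Γ, Λ)`. -/
def wordOfSeq (Λ : Fin n → Fin n → ℕ) (S : List (Fin n)) :
    (Fin n → ℤ) ≃ₗ[ℤ] (Fin n → ℤ) :=
  ((S.reverse).map (wSig Λ)).prod

/-- The word `w(S)` is reduced: `ℓ(w(S))` equals the number of letters of `S`. -/
noncomputable def IsReducedSeq (Λ : Fin n → Fin n → ℕ) (S : List (Fin n)) : Prop :=
  wordLen (cartanOf Λ) (cartan_diag Λ) (wordOfSeq Λ S) = S.length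

/-! ## Dynkin graphs of types A, D, E -/

def edgeA (n : ℕ) : Fin n → Fin n → ℕ := fun i j =>
  if (i : ℕ) + 1 = (j : ℕ) ∨ (j : ℕ) + 1 = (i : ℕ) then 1 else 0

def edgeD (n : ℕ) : Fin n → Fin n → ℕ := fun i j =>
  if ((i : ℕ) = 0 ∧ (j : ℕ) = 2) ∨ ((j : ℕ) = 0 ∧ (i : ℕ) = 2) ∨
     ((i : ℕ) = 1 ∧ (j : ℕ) = 2) ∨ ((j : ℕ) = 1 ∧ (i : ℕ) = 2) ∨
     (2 ≤ (i : ℕ) ∧ (i : ℕ) + 1 = (j : ℕ)) ∨ (2 ≤ (j : ℕ) ∧ (j : ℕ) + 1 = (i : ℕ))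
  then 1 else 0

def edgeE (n : ℕ) : Fin n → Fin n → ℕ := fun i j =>
  if ((i : ℕ) + 1 = (j : ℕ) ∧ (j : ℕ) ≤ n - 2) ∨ ((j : ℕ) + 1 = (i : ℕ) ∧ (i : ℕ) ≤ n - 2) ∨
     ((i : ℕ) = 2 ∧ (j : ℕ) = n - 1) ∨ ((j : ℕ) = 2 ∧ (i : ℕ) = n - 1)
  then 1 else 0

/-- The underlying graph (given by its edge-count function `E`) is a Dynkin diagram of
type `A`, `D`, or `E`. -/
def IsDynkinADE (n : ℕ) (E : Fin n → Fin n → ℕ) : Prop :=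
  ∃ e : Fin n ≃ Fin n,
    (∀ i j, E i j = edgeA n (e i) (e j)) ∨
    (4 ≤ n ∧ ∀ i j, E i j = edgeD n (e i) (e j)) ∨
    ((n = 6 ∨ n = 7 ∨ n = 8) ∧ ∀ i j, E i j = edgeE n (e i) (e j))

/-! ## Coxeter-sortable elements -/

/-- Lexicographic comparison of index tuples. -/
def lexLE {s : ℕ} (ι ι' : Fin s → ℕ) : Prop :=
  ι = ι' ∨ ∃ j, (∀ j', j' < j → ι j' = ι' j') ∧ ι j < ι' j

/-- `w` is `c`-sortable for the Coxeter element determined by the half-infinite word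
`cseq` (with dividers every `blockLen` letters): the lexicographically first subsequence
of `cseq` that is a reduced word for `w` defines a sequence of subsets (between adjacent
dividers) that is decreasing under inclusion. -/
def CSortable (A : Fin n → Fin n → ℤ) (hA : ∀ i, A i i = 2) (cseq : ℕ → Fin n)
    (blockLen : ℕ) (w : (Fin n → ℤ) ≃ₗ[ℤ] (Fin n → ℤ)) : Prop :=
  ∃ (s : ℕ) (ι : Fin s → ℕ), StrictMono ι ∧
    w = ((List.ofFn fun j => cseq (ι j)).map (sigmaE A hA)).prod ∧
    wordLen A hA w = s ∧
    (∀ ι' : Fin s → ℕ, StrictMono ι' →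
      w = ((List.ofFn fun j => cseq (ι' j)).map (sigmaE A hA)).prod → lexLE ι ι') ∧
    ∀ m : ℕ, {a : Fin n | ∃ j, (ι j) / blockLen = m + 1 ∧ cseq (ι j) = a} ⊆
             {a : Fin n | ∃ j, (ι j) / blockLen = m ∧ cseq (ι j) = a}


/-- A nonzero non-isomorphism between representations. -/
def RepStep {k : Type} [Field k] {n : ℕ} {Λ : Fin n → Fin n → ℕ} (X Y : Rep k n Λ) : Prop :=
  ∃ f : RepHom X Y, (∃ x v, f.g x v ≠ 0) ∧ ¬ ∀ x, Function.Bijective (f.g x)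

/-- `v` is a minimal element of `D` in the poset `(Γ₀, Λ)`. -/
def MinimalIn {n : ℕ} (Λ : Fin n → Fin n → ℕ) (D : Set (Fin n)) (v : Fin n) : Prop :=
  v ∈ D ∧ ∀ u ∈ D, PathLE Λ u v → u = v

/-- The pairs `(h, v)` of Proposition 3.2(a): `0 < h ≤ r` and `v` a minimal element of
`Supp S_h \ H_Λ(Supp S_{h+1})` (with `Supp S_{r+1} = ∅`). -/
def JoinPair {n : ℕ} (Λ : Fin n → Fin n → ℕ) (segs : List (List (Fin n)))
    (p : ℕ × Fin n) : Prop :=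
  0 < p.1 ∧ p.1 ≤ segs.length ∧
  MinimalIn Λ (suppOf (segs.getD (p.1 - 1) []) \ hull Λ (suppOf (segs.getD p.1 []))) p.2

/-! A sink of `Λ` that occurs in an admissible sequence can be commuted to its front, so an
admissible sequence is determined up to `∼` by its count vector `v ↦ S.count v`, and `S ⪯ T`
holds exactly when the count vector of `S` is pointwise below that of `T`. Count vectors of
admissible sequences satisfy `c u ≤ c v ≤ c u + 1` along every arrow `u → v`; conversely, as `Λ`
is acyclic, every such `c` is realised by flipping the level sets `{v | i < c v}` one after the
other, and these level sets form the canonical form. The arrow condition is preserved by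
pointwise `min` and `max`, which therefore realise the meet and the join. -/

section Orientation

variable {n : ℕ} {Λ : Fin n → Fin n → ℕ}

theorem edges_comm (Λ : Fin n → Fin n → ℕ) (a b : Fin n) : edges Λ a b = edges Λ b a :=
  Nat.add_comm _ _

theorem edges_flipO (x : Fin n) (Λ : Fin n → Fin n → ℕ) : edges (flipO x Λ) = edges Λ := by
  funext a b
  by_cases h : a = x ∨ b = x
  · simp only [edges, flipO, if_pos h, if_pos h.symm, Nat.add_comm]
  · simp only [edges, flipO, if_neg h, if_neg (mt Or.symm h)]

theorem flipO_comm (x y : Fin n) (Λ : Fin n → Fin n → ℕ) :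
    flipO x (flipO y Λ) = flipO y (flipO x Λ) := by
  funext a b
  by_cases h1 : a = x ∨ b = x <;> by_cases h2 : a = y ∨ b = y <;> simp [flipO, h1, h2, or_comm]

theorem IsSink.flipO {y z : Fin n} (hy : IsSink Λ y) (hz : IsSink Λ z) (hne : y ≠ z) :
    IsSink (flipO z Λ) y := by
  intro w
  by_cases hw : w = z
  · simp [KP.flipO, hw, hz y]
  · simp [KP.flipO, hne, hw, hy w]

theorem Admissible.append {S U : List (Fin n)} (hS : Admissible Λ S)
    (hU : Admissible (orientAfter Λ S) U) : Admissible Λ (S ++ U) := by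
  induction S generalizing Λ with
  | nil => exact hU
  | cons x S ih => exact ⟨hS.1, ih hS.2 hU⟩

theorem orientAfter_of_nodup {D : List (Fin n)} (hD : D.Nodup) (a b : Fin n) :
    orientAfter Λ D a b = if (a ∈ D ↔ b ∈ D) then Λ a b else Λ b a := by
  induction D generalizing Λ with
  | nil => simp [orientAfter]
  | cons x D ih =>
    rw [List.nodup_cons] at hD
    simp only [orientAfter, ih hD.2]
    by_cases hax : a = x <;> by_cases hbx : b = x <;> by_cases haD : a ∈ D <;>
      by_cases hbD : b ∈ D <;> simp_all [KP.flipO]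

end Orientation

section SwapEquivalence

variable {n : ℕ} {E : Fin n → Fin n → ℕ} {S T : List (Fin n)}

theorem SwapRel.symm (hE : ∀ a b, E a b = E b a) (h : SwapRel E S T) : SwapRel E T S := by
  obtain ⟨l₁, l₂, a, b, hab⟩ := h
  exact .swap l₁ l₂ b a (hE a b ▸ hab)

theorem SwapRel.cons (x : Fin n) (h : SwapRel E S T) : SwapRel E (x :: S) (x :: T) := by
  obtain ⟨l₁, l₂, a, b, hab⟩ := h
  exact .swap (x :: l₁) l₂ a b hab

theorem SwapRel.perm (h : SwapRel E S T) : S.Perm T := by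
  obtain ⟨l₁, l₂, a, b, -⟩ := h
  exact .append_left l₁ (.swap b a l₂)

theorem Sim.symm (hE : ∀ a b, E a b = E b a) (h : Sim E S T) : Sim E T S :=
  Relation.reflTransGen_swap.mp (Relation.ReflTransGen.mono (fun _ _ h => h.symm hE) _ _ h)

theorem Sim.cons (x : Fin n) (h : Sim E S T) : Sim E (x :: S) (x :: T) :=
  Relation.ReflTransGen.lift (x :: ·) (fun _ _ h => h.cons x) _ _ h

theorem Sim.count_eq (h : Sim E S T) (v : Fin n) : S.count v = T.count v :=
  (Relation.reflTransGen_le_of_equivalence_of_le (List.Perm.eqv _)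
    (fun _ _ h => SwapRel.perm h) _ _ h).count_eq v

end SwapEquivalence

section Preorder

variable {n : ℕ} {Λ : Fin n → Fin n → ℕ} {S T : List (Fin n)}

theorem exists_sim_cons_of_isSink_mem {y : Fin n} (hy : IsSink Λ y) (hS : Admissible Λ S)
    (hyS : y ∈ S) : ∃ S', Admissible Λ (y :: S') ∧ Sim (edges Λ) S (y :: S') := by
  induction S generalizing Λ with
  | nil => simp at hyS
  | cons z R ih =>
    obtain ⟨hz, hR⟩ := hS
    by_cases hzy : z = y
    · subst hzy
      exact ⟨R, ⟨hz, hR⟩, .refl⟩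
    have hyR : y ∈ R := (List.mem_cons.mp hyS).resolve_left (Ne.symm hzy)
    obtain ⟨R', hadm, hsim⟩ := ih (hy.flipO hz (Ne.symm hzy)) hR hyR
    rw [edges_flipO] at hsim
    -- `y` and `z` are both sinks, so no edge joins them and they commute
    have hswap : SwapRel (edges Λ) (z :: y :: R') (y :: z :: R') :=
      .swap [] R' z y (by simp [edges, hz y, hy z])
    refine ⟨z :: R', ⟨hy, hz.flipO hy hzy, ?_⟩, (hsim.cons z).tail hswap⟩
    rw [flipO_comm]
    exact hadm.2

theorem Preceq.count_le (h : Preceq Λ S T) (v : Fin n) : S.count v ≤ T.count v := by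
  obtain ⟨U, -, hsim⟩ := h
  rw [hsim.count_eq v, List.count_append]
  exact Nat.le_add_right _ _

theorem preceq_of_count_le (hS : Admissible Λ S) (hT : Admissible Λ T)
    (h : ∀ v, S.count v ≤ T.count v) : Preceq Λ S T := by
  induction S generalizing Λ T with
  | nil => exact ⟨T, hT, .refl⟩
  | cons x S ih =>
    obtain ⟨hx, hS⟩ := hS
    have hxT : x ∈ T := List.count_pos_iff.mp ((Nat.zero_le _).trans_lt (by simpa using h x))
    obtain ⟨T', hT', hsim⟩ := exists_sim_cons_of_isSink_mem hx hT hxT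
    have hcount : ∀ v, S.count v ≤ T'.count v := by
      intro v
      have := hsim.count_eq v ▸ h v
      simp only [List.count_cons] at this
      omega
    obtain ⟨U, hU, hsimU⟩ := ih hS hT'.2 hcount
    rw [edges_flipO] at hsimU
    exact ⟨U, hU, hsim.trans (hsimU.cons x)⟩

theorem sim_of_count_eq (hS : Admissible Λ S) (hT : Admissible Λ T)
    (h : ∀ v, S.count v = T.count v) : Sim (edges Λ) S T := by
  obtain ⟨U, -, hsim⟩ := preceq_of_count_le hS hT fun v => (h v).le
  have hU : U = [] := List.eq_nil_iff_forall_not_mem.mpr fun v => by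
    have := hsim.count_eq v
    rw [List.count_append, ← h v] at this
    exact List.count_eq_zero.mp (by omega)
  rw [hU, List.append_nil] at hsim
  exact hsim.symm (edges_comm Λ)

theorem preceq_of_sim (h : Sim (edges Λ) S T) : Preceq Λ S T :=
  ⟨[], trivial, by simpa using h.symm (edges_comm Λ)⟩

theorem preceq_refl (S : List (Fin n)) : Preceq Λ S S :=
  preceq_of_sim .refl

theorem preceq_trans {U : List (Fin n)} (hS : Admissible Λ S) (hU : Admissible Λ U)
    (hST : Preceq Λ S T) (hTU : Preceq Λ T U) : Preceq Λ S U :=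
  preceq_of_count_le hS hU fun v => (hST.count_le v).trans (hTU.count_le v)

theorem preceq_and_preceq_iff_sim (hS : Admissible Λ S) (hT : Admissible Λ T) :
    Preceq Λ S T ∧ Preceq Λ T S ↔ Sim (edges Λ) S T :=
  ⟨fun ⟨hST, hTS⟩ => sim_of_count_eq hS hT fun v => (hST.count_le v).antisymm (hTS.count_le v),
    fun h => ⟨preceq_of_sim h, preceq_of_sim (h.symm (edges_comm Λ))⟩⟩

end Preorder

section CountVectors

variable {n : ℕ} {Λ : Fin n → Fin n → ℕ} {c d : Fin n → ℕ}

def ArrowCompatible (Λ : Fin n → Fin n → ℕ) (c : Fin n → ℕ) : Prop :=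
  ∀ u v, Λ u v ≠ 0 → c u ≤ c v ∧ c v ≤ c u + 1

theorem arrowCompatible_count {S : List (Fin n)} (hS : Admissible Λ S) :
    ArrowCompatible Λ fun v => S.count v := by
  induction S generalizing Λ with
  | nil => simp [ArrowCompatible]
  | cons x R ih =>
    obtain ⟨hx, hR⟩ := hS
    intro u v huv
    have hu : u ≠ x := by rintro rfl; exact huv (hx v)
    by_cases hv : v = x
    · subst hv
      have := ih hR v u (by simpa [flipO] using huv)
      simp only [List.count_cons, beq_iff_eq, Ne.symm hu, if_false, if_true] at this ⊢
      omega
    · have := ih hR u v (by simpa [flipO, hu, hv] using huv)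
      simpa [List.count_cons, Ne.symm hu, Ne.symm hv] using this

theorem ArrowCompatible.min (hc : ArrowCompatible Λ c) (hd : ArrowCompatible Λ d) :
    ArrowCompatible Λ fun v => min (c v) (d v) := fun u v huv => by
  have := hc u v huv
  have := hd u v huv
  dsimp only
  omega

theorem ArrowCompatible.max (hc : ArrowCompatible Λ c) (hd : ArrowCompatible Λ d) :
    ArrowCompatible Λ fun v => max (c v) (d v) := fun u v huv => by
  have := hc u v huv
  have := hd u v huv
  dsimp only
  omega

theorem ArrowCompatible.orientAfter_sub_one (hc : ArrowCompatible Λ c) {D : List (Fin n)}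
    (hD : D.Nodup) (hmem : ∀ v, v ∈ D ↔ 0 < c v) :
    ArrowCompatible (orientAfter Λ D) fun v => c v - 1 := by
  intro u v huv
  simp only [orientAfter_of_nodup hD, hmem] at huv
  dsimp only
  split_ifs at huv with h
  · have := hc u v huv
    omega
  · have := hc v u huv
    omega

end CountVectors

section Acyclic

variable {n : ℕ} {Λ : Fin n → Fin n → ℕ}

def IsAcyclic (Λ : Fin n → Fin n → ℕ) : Prop :=
  ∀ a, ¬ Relation.TransGen (fun u v => Λ u v ≠ 0) a a

theorem IsAcyclic.flipO {x : Fin n} (hac : IsAcyclic Λ) (hx : IsSink Λ x) :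
    IsAcyclic (flipO x Λ) := by
  -- no arrow of `σ_x Λ` ends at `x`, so a cycle of `σ_x Λ` avoids `x` and is a cycle of `Λ`
  have hend : ∀ u v, KP.flipO x Λ u v ≠ 0 → v ≠ x := by
    rintro u v huv rfl
    simp [KP.flipO, hx u] at huv
  have hstep : ∀ u v, KP.flipO x Λ u v ≠ 0 → u ≠ x → Λ u v ≠ 0 := fun u v huv hu => by
    simpa [KP.flipO, hu, hend u v huv] using huv
  have hlift : ∀ a b, Relation.TransGen (fun u v => KP.flipO x Λ u v ≠ 0) a b → a ≠ x →
      Relation.TransGen (fun u v => Λ u v ≠ 0) a b := by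
    intro a b h
    induction h using Relation.TransGen.head_induction_on with
    | single h => exact fun ha => .single (hstep _ _ h ha)
    | head h _ ih => exact fun ha => .head (hstep _ _ h ha) (ih (hend _ _ h))
  intro a h
  obtain ⟨b, -, hba⟩ := Relation.TransGen.tail'_iff.mp h
  exact hac a (hlift a a h (hend b a hba))

theorem IsAcyclic.orientAfter {S : List (Fin n)} (hac : IsAcyclic Λ) (hS : Admissible Λ S) :
    IsAcyclic (orientAfter Λ S) := by
  induction S generalizing Λ with
  | nil => exact hac
  | cons x S ih => exact ih (hac.flipO hS.1) hS.2

theorem IsAcyclic.exists_isSink_mem (hac : IsAcyclic Λ) {W : Finset (Fin n)} (hW : W.Nonempty)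
    (hcl : ∀ u ∈ W, ∀ v, Λ u v ≠ 0 → v ∈ W) : ∃ m ∈ W, IsSink Λ m := by
  let R : Fin n → Fin n → Prop := fun a b => Relation.TransGen (fun u v => Λ u v ≠ 0) b a
  have : IsTrans (Fin n) R := ⟨fun _ _ _ h₁ h₂ => h₂.trans h₁⟩
  have : Std.Irrefl R := ⟨hac⟩
  obtain ⟨m, hm, hmin⟩ := (Finite.wellFounded_of_trans_of_irrefl R).has_min W (by simpa using hW)
  refine ⟨m, hm, fun v => ?_⟩
  by_contra hv
  exact hmin v (hcl m hm v hv) (.single hv)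

theorem IsAcyclic.exists_admissible_nodup (hac : IsAcyclic Λ) (W : Finset (Fin n))
    (hcl : ∀ u ∈ W, ∀ v, Λ u v ≠ 0 → v ∈ W) :
    ∃ D : List (Fin n), D.Nodup ∧ D.toFinset = W ∧ Admissible Λ D := by
  induction hk : W.card generalizing Λ W with
  | zero => exact ⟨[], List.nodup_nil, by simp_all, trivial⟩
  | succ k ih =>
    obtain ⟨m, hm, hsink⟩ := hac.exists_isSink_mem (Finset.card_pos.mp (by omega)) hcl
    have hcl' : ∀ u ∈ W.erase m, ∀ v, KP.flipO m Λ u v ≠ 0 → v ∈ W.erase m := by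
      intro u hu v huv
      have hum := Finset.ne_of_mem_erase hu
      have hvm : v ≠ m := by rintro rfl; simp [KP.flipO, hsink u] at huv
      exact Finset.mem_erase.mpr
        ⟨hvm, hcl u (Finset.mem_of_mem_erase hu) v (by simpa [KP.flipO, hum, hvm] using huv)⟩
    obtain ⟨D, hD, hDW, hadm⟩ := ih (hac.flipO hsink) (W.erase m) hcl'
      (by rw [Finset.card_erase_of_mem hm, hk]; rfl)
    refine ⟨m :: D, List.nodup_cons.mpr ⟨fun hmD => ?_, hD⟩, ?_, hsink, hadm⟩
    · have : m ∈ W.erase m := hDW ▸ List.mem_toFinset.mpr hmD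
      simp at this
    · rw [List.toFinset_cons, hDW, Finset.insert_erase hm]

end Acyclic

section CanonicalForm

variable {n : ℕ} {Λ : Fin n → Fin n → ℕ} {c : Fin n → ℕ}

def IsLevelDecomposition (c : Fin n → ℕ) (segs : List (List (Fin n))) : Prop :=
  (∀ seg ∈ segs, seg ≠ [] ∧ seg.Nodup) ∧
  (∀ i, suppOf (segs.getD i []) = {v | i < c v}) ∧
  (∀ i, suppOf (segs.drop i).flatten = {v | i < c v}) ∧
  ∀ v, segs.flatten.count v = c v

theorem isLevelDecomposition_nil (hc : ∀ v, c v = 0) : IsLevelDecomposition c [] := by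
  refine ⟨by simp, fun i => ?_, fun i => ?_, by simp [hc]⟩ <;> ext v <;> simp [suppOf, hc]

theorem IsLevelDecomposition.cons {D : List (Fin n)} {segs : List (List (Fin n))}
    (h : IsLevelDecomposition (fun v => c v - 1) segs) (hD : D.Nodup) (hD₀ : D ≠ [])
    (hmem : ∀ v, v ∈ D ↔ 0 < c v) : IsLevelDecomposition c (D :: segs) := by
  obtain ⟨hsegs, hget, hdrop, hcount⟩ := h
  refine ⟨List.forall_mem_cons.mpr ⟨⟨hD₀, hD⟩, hsegs⟩, fun i => ?_, fun i => ?_, fun v => ?_⟩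
  · cases i with
    | zero => ext v; simp [suppOf, hmem]
    | succ i =>
      rw [List.getD_cons_succ, hget i]
      ext v
      simp only [Set.mem_ofPred_eq]
      omega
  · cases i with
    | zero =>
      have h0 := hdrop 0
      simp only [suppOf, Set.ext_iff, List.drop_zero, Set.mem_ofPred_eq] at h0
      ext v
      simp only [suppOf, List.drop_zero, List.flatten_cons, List.mem_append, hmem, h0,
        Set.mem_ofPred_eq]
      omega
    | succ i =>
      rw [List.drop_succ_cons, hdrop i]
      ext v
      simp only [Set.mem_ofPred_eq]
      omega
  · rw [List.flatten_cons, List.count_append, hcount v]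
    by_cases hv : v ∈ D
    · rw [List.count_eq_one_of_mem hD hv]
      have := (hmem v).mp hv
      dsimp only
      omega
    · rw [List.count_eq_zero_of_not_mem hv]
      have := mt (hmem v).mpr hv
      dsimp only
      omega

theorem exists_admissible_isLevelDecomposition (hac : IsAcyclic Λ) (hc : ArrowCompatible Λ c) :
    ∃ segs, Admissible Λ segs.flatten ∧ IsLevelDecomposition c segs := by
  induction hN : ∑ v, c v using Nat.strong_induction_on generalizing Λ c with
  | _ N ih =>
    by_cases hz : ∀ v, c v = 0
    · exact ⟨[], trivial, isLevelDecomposition_nil hz⟩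
    obtain ⟨v₀, hv₀⟩ := not_forall.mp hz
    obtain ⟨D, hD, hDW, hadmD⟩ := hac.exists_admissible_nodup
      (Finset.univ.filter fun v => 0 < c v) fun u hu v huv => by
        have := (hc u v huv).1
        simp only [Finset.mem_filter, Finset.mem_univ, true_and] at hu ⊢
        omega
    have hmem : ∀ v, v ∈ D ↔ 0 < c v := fun v => by
      rw [← List.mem_toFinset, hDW]
      simp
    have hlt : ∑ v, (c v - 1) < N := hN ▸ Finset.sum_lt_sum (fun v _ => Nat.sub_le _ _)
      ⟨v₀, Finset.mem_univ _, by omega⟩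
    obtain ⟨segs, hadm, hsegs⟩ :=
      ih _ hlt (hac.orientAfter hadmD) (hc.orientAfter_sub_one hD hmem) rfl
    refine ⟨D :: segs, hadmD.append hadm, hsegs.cons hD ?_ hmem⟩
    exact List.ne_nil_of_mem ((hmem v₀).mpr (Nat.pos_of_ne_zero hv₀))

theorem segments_of_isLevelDecomposition {S : List (Fin n)} {segs : List (List (Fin n))}
    (hadm : Admissible Λ segs.flatten) (h : IsLevelDecomposition c segs)
    (hsim : Sim (edges Λ) S segs.flatten) : Segments Λ S segs :=
  ⟨hadm, hsim, h.1, fun i _ => (h.2.1 i).trans (h.2.2.1 i).symm⟩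

theorem exists_segments (hac : IsAcyclic Λ) {S : List (Fin n)} (hS : Admissible Λ S) :
    ∃ CS, Segments Λ S CS ∧ ∀ i, suppOf (CS.getD i []) = {v | i < S.count v} := by
  obtain ⟨segs, hadm, h⟩ :=
    exists_admissible_isLevelDecomposition hac (arrowCompatible_count hS)
  exact ⟨segs, segments_of_isLevelDecomposition hadm h
    (sim_of_count_eq hS hadm fun v => (h.2.2.2 v).symm), h.2.1⟩

theorem exists_admissible_count_eq (hac : IsAcyclic Λ) (hc : ArrowCompatible Λ c) :
    ∃ M, Admissible Λ M ∧ ∀ v, M.count v = c v := by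
  obtain ⟨segs, hadm, h⟩ := exists_admissible_isLevelDecomposition hac hc
  exact ⟨segs.flatten, hadm, h.2.2.2⟩

end CanonicalForm

section Lattice

variable {n : ℕ} {Λ : Fin n → Fin n → ℕ} {S T : List (Fin n)}

theorem exists_isMeet (hac : IsAcyclic Λ) (hS : Admissible Λ S) (hT : Admissible Λ T) :
    ∃ M, Admissible Λ M ∧ IsMeet Λ S T M ∧ Preceq Λ M S ∧ Preceq Λ M T ∧
      ∀ R, Admissible Λ R → Preceq Λ R S → Preceq Λ R T → Preceq Λ R M := by
  obtain ⟨M, hM, hcount⟩ := exists_admissible_count_eq hac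
    ((arrowCompatible_count hS).min (arrowCompatible_count hT))
  obtain ⟨CS, hCS, hsuppS⟩ := exists_segments hac hS
  obtain ⟨CT, hCT, hsuppT⟩ := exists_segments hac hT
  obtain ⟨CM, hCM, hsuppM⟩ := exists_segments hac hM
  refine ⟨M, hM, ⟨CS, CT, CM, hCS, hCT, hCM, fun i => ?_⟩, ?_, ?_, fun R hR hRS hRT => ?_⟩
  · ext v
    simp only [hsuppM, hsuppS, hsuppT, hcount, Set.mem_inter_iff, Set.mem_ofPred_eq, lt_min_iff]
  · exact preceq_of_count_le hM hS fun v => hcount v ▸ min_le_left _ _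
  · exact preceq_of_count_le hM hT fun v => hcount v ▸ min_le_right _ _
  · exact preceq_of_count_le hR hM fun v => hcount v ▸ le_min (hRS.count_le v) (hRT.count_le v)

theorem exists_isJoin (hac : IsAcyclic Λ) (hS : Admissible Λ S) (hT : Admissible Λ T) :
    ∃ J, Admissible Λ J ∧ IsJoin Λ S T J ∧ Preceq Λ S J ∧ Preceq Λ T J ∧
      ∀ R, Admissible Λ R → Preceq Λ S R → Preceq Λ T R → Preceq Λ J R := by
  obtain ⟨J, hJ, hcount⟩ := exists_admissible_count_eq hac
    ((arrowCompatible_count hS).max (arrowCompatible_count hT))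
  obtain ⟨CS, hCS, hsuppS⟩ := exists_segments hac hS
  obtain ⟨CT, hCT, hsuppT⟩ := exists_segments hac hT
  obtain ⟨CJ, hCJ, hsuppJ⟩ := exists_segments hac hJ
  refine ⟨J, hJ, ⟨CS, CT, CJ, hCS, hCT, hCJ, fun i => ?_⟩, ?_, ?_, fun R hR hSR hTR => ?_⟩
  · ext v
    simp only [hsuppJ, hsuppS, hsuppT, hcount, Set.mem_union, Set.mem_ofPred_eq, lt_max_iff]
  · exact preceq_of_count_le hS hJ fun v => hcount v ▸ le_max_left _ _
  · exact preceq_of_count_le hT hJ fun v => hcount v ▸ le_max_right _ _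
  · exact preceq_of_count_le hJ hR fun v => hcount v ▸ max_le (hSR.count_le v) (hTR.count_le v)

end Lattice

theorem admissible_sequences_form_lattice_general
    (n : ℕ) (Λ : Fin n → Fin n → ℕ)
    (hacyc : ∀ a : Fin n, ¬ Relation.TransGen (fun u v => Λ u v ≠ 0) a a)
    : (∀ S, Admissible Λ S → Preceq Λ S S) ∧
    (∀ S T U, Admissible Λ S → Admissible Λ T → Admissible Λ U →
      Preceq Λ S T → Preceq Λ T U → Preceq Λ S U) ∧
    (∀ S T, Admissible Λ S → Admissible Λ T →
      ((Preceq Λ S T ∧ Preceq Λ T S) ↔ Sim (edges Λ) S T)) ∧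
    (∀ S T, Admissible Λ S → Admissible Λ T →
      ∃ MT, Admissible Λ MT ∧ IsMeet Λ S T MT ∧
        Preceq Λ MT S ∧ Preceq Λ MT T ∧
        ∀ R, Admissible Λ R → Preceq Λ R S → Preceq Λ R T → Preceq Λ R MT) ∧
    (∀ S T, Admissible Λ S → Admissible Λ T →
      ∃ J, Admissible Λ J ∧ IsJoin Λ S T J ∧
        Preceq Λ S J ∧ Preceq Λ T J ∧
        ∀ R, Admissible Λ R → Preceq Λ S R → Preceq Λ T R → Preceq Λ J R) :=
  ⟨fun S _ => preceq_refl S,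
    fun _ _ _ hS _ hU => preceq_trans hS hU,
    fun _ _ => preceq_and_preceq_iff_sim,
    fun _ _ => exists_isMeet hacyc,
    fun _ _ => exists_isJoin hacyc⟩

theorem admissible_sequences_form_lattice
    (n : ℕ) (hn : 2 ≤ n) (Λ : Fin n → Fin n → ℕ)
    (hloop : ∀ a, Λ a a = 0)
    (hconn : ∀ a b : Fin n, Relation.ReflTransGen (fun u v => edges Λ u v ≠ 0) a b)
    (hacyc : ∀ a : Fin n, ¬ Relation.TransGen (fun u v => Λ u v ≠ 0) a a)
    : (∀ S, Admissible Λ S → Preceq Λ S S) ∧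
    (∀ S T U, Admissible Λ S → Admissible Λ T → Admissible Λ U →
      Preceq Λ S T → Preceq Λ T U → Preceq Λ S U) ∧
    (∀ S T, Admissible Λ S → Admissible Λ T →
      ((Preceq Λ S T ∧ Preceq Λ T S) ↔ Sim (edges Λ) S T)) ∧
    (∀ S T, Admissible Λ S → Admissible Λ T →
      ∃ MT, Admissible Λ MT ∧ IsMeet Λ S T MT ∧
        Preceq Λ MT S ∧ Preceq Λ MT T ∧
        ∀ R, Admissible Λ R → Preceq Λ R S → Preceq Λ R T → Preceq Λ R MT) ∧
    (∀ S T, Admissible Λ S → Admissible Λ T →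
      ∃ J, Admissible Λ J ∧ IsJoin Λ S T J ∧
        Preceq Λ S J ∧ Preceq Λ T J ∧
        ∀ R, Admissible Λ R → Preceq Λ S R → Preceq Λ T R → Preceq Λ J R) :=
  admissible_sequences_form_lattice_general n Λ hacyc

end KP
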